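/- Let R be a commutative ring whose nilradical Nil(R) is a divided prime ideal (i.e., R ∈ H). If T is a ring containing R such that Spec(R) = Spec(T), then the nilradical Nil(T) of T is a divided prime ideal of T (i.e., T ∈ H). -/

import Mathlib

/-- A subset `S` of a ring `A` is (the underlying set of) a prime ideal of the subring `B`. -/
def IsPrimeIdealSetOf {A : Type*} [CommRing A] (B : Subring A) (S : Set A) : Prop :=
  ∃ I : Ideal B, I.IsPrime ∧ Subtype.val '' (I : Set B) = S

/-- `Spec(R) = Spec(T)` for a subring `R` of `T`: a subset of `T` is a prime ideal of `T`
iff it is a prime ideal of `R`. -/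
def SpecEq {T : Type*} [CommRing T] (R : Subring T) : Prop :=
  ∀ S : Set T, (∃ J : Ideal T, J.IsPrime ∧ (J : Set T) = S) ↔ IsPrimeIdealSetOf R S
/-- An ideal `P` of `R` is divided if it is comparable with every ideal of `R`. -/
def Ideal.IsDivided {R : Type*} [CommRing R] (P : Ideal R) : Prop :=
  ∀ I : Ideal R, I ≤ P ∨ P ≤ I

/-- `R ∈ H` : the nilradical of `R` is a divided prime ideal. -/
def MemH (R : Type*) [CommRing R] : Prop :=
  (nilradical R).IsPrime ∧ (nilradical R).IsDivided

/-! Every nonunit of `T` lies in a maximal ideal, which is a prime of `R` and hence contained in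
`R`; so an element of `T` outside `Nil(T)` is either a unit or an element of `R` outside `Nil(R)`.
Moreover the prime `Nil(R)` is a prime `J` of `T`, and `Nil(T) ⊆ J = Nil(R) ⊆ Nil(T)`. Thus
`Nil(T) = Nil(R) ⊆ xR ⊆ xT` for every nonunit `x ∉ Nil(T)`, which makes `Nil(T)` divided. -/

namespace Ideal

variable {A : Type*} [CommRing A] {P : Ideal A}

theorem IsDivided.le_span_singleton (hP : P.IsDivided) {x : A} (hx : x ∉ P) :
    P ≤ span {x} :=
  (hP _).resolve_left fun h ↦ hx (h (mem_span_singleton_self x))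

theorem isDivided_of_le_span_singleton (h : ∀ x ∉ P, P ≤ span {x}) : P.IsDivided := by
  refine fun I ↦ or_iff_not_imp_left.2 fun hI ↦ ?_
  obtain ⟨x, hxI, hxP⟩ := SetLike.not_le_iff_exists.1 hI
  exact (h x hxP).trans ((span_singleton_le_iff_mem I).2 hxI)

end Ideal

namespace SpecEq

variable {T : Type*} [CommRing T] {R : Subring T}

theorem coe_subset_of_isPrime (hspec : SpecEq R) {J : Ideal T} (hJ : J.IsPrime) :
    (J : Set T) ⊆ R := by
  obtain ⟨I, -, hIJ⟩ := (hspec J).1 ⟨J, hJ, rfl⟩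
  rw [← hIJ]
  exact Subtype.coe_image_subset _ _

theorem mem_of_not_isUnit (hspec : SpecEq R) {x : T} (hx : ¬IsUnit x) : x ∈ R := by
  obtain ⟨M, hM, hxM⟩ := exists_max_ideal_of_mem_nonunits hx
  exact hspec.coe_subset_of_isPrime hM.isPrime hxM

theorem coe_nilradical (hspec : SpecEq R) (hP : (nilradical R).IsPrime) :
    (nilradical T : Set T) = Subtype.val '' (nilradical R : Set R) := by
  obtain ⟨J, hJ, hJP⟩ := (hspec _).2 ⟨nilradical R, hP, rfl⟩
  refine subset_antisymm (hJP ▸ nilradical_le_prime J) ?_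
  rintro _ ⟨y, hy, rfl⟩
  exact (IsNilpotent.map_iff (f := R.subtype) Subtype.val_injective).2 hy

theorem isPrime_nilradical (hspec : SpecEq R) (hP : (nilradical R).IsPrime) :
    (nilradical T).IsPrime := by
  obtain ⟨J, hJ, hJP⟩ := (hspec _).2 ⟨nilradical R, hP, rfl⟩
  rwa [SetLike.coe_injective ((hspec.coe_nilradical hP).trans hJP.symm)]

theorem nilradical_le_span_singleton (hspec : SpecEq R) (hR : MemH R) {x : T}
    (hx : x ∉ nilradical T) : nilradical T ≤ Ideal.span {x} := by
  by_cases hu : IsUnit x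
  · simp [Ideal.span_singleton_eq_top.2 hu]
  have hxR := hspec.mem_of_not_isUnit hu
  have hxP : (⟨x, hxR⟩ : R) ∉ nilradical R := fun h ↦ hx <| by
    rw [← SetLike.mem_coe, hspec.coe_nilradical hR.1]
    exact ⟨_, h, rfl⟩
  intro z hz
  obtain ⟨y, hy, rfl⟩ : z ∈ Subtype.val '' (nilradical R : Set R) :=
    hspec.coe_nilradical hR.1 ▸ hz
  have hmap := Ideal.mem_map_of_mem R.subtype (hR.2.le_span_singleton hxP hy)
  rwa [Ideal.map_span, Set.image_singleton] at hmap

end SpecEq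

/-- If `R ∈ H` and `T` is a ring containing `R` with `Spec(R) = Spec(T)`,
then `T ∈ H`. -/
theorem stmt2 {T : Type*} [CommRing T] (R : Subring T)
    (hR : MemH ↥R) (hspec : SpecEq R) : MemH T :=
  ⟨hspec.isPrime_nilradical hR.1,
    Ideal.isDivided_of_le_span_singleton fun _ ↦ hspec.nilradical_le_span_singleton hR⟩
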